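/- arXiv:1609.00271 — 6 statements merged into one kernel-verified Lean document; each statement's English description precedes it below -/
import Mathlib

section
/- Let V be a unital Jordan algebra over K. For every pair derivation (D⁺, D⁻) of V there exist a unique element a ∈ V and a unique derivation D of V such that D⁺ = L_a + D and D⁻ = −L_a + D. Conversely, for every a ∈ V and every derivation D of V, the pair (L_a + D, −L_a + D) is a pair derivation of V. Consequently the map L_a + D ↦ (L_a + D, −L_a + D) is a Lie algebra isomorphism from the structure algebra str(V) onto Der(V,V). -/
variable {K V : Type*} [Field K] [AddCommGroup V] [Module K V]

/-- The Jordan triple product `{x,y,z} = 2((xy)z + x(yz) - y(xz))`. -/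
def triple (m : V →ₗ[K] V →ₗ[K] V) (x y z : V) : V :=
  2 • (m (m x y) z + m x (m y z) - m y (m x z))

/-- The operator `D_{x,y} = 2 L_{xy} + 2[L_x, L_y]`, satisfying `D_{x,y} z = {x,y,z}`. -/
def Dop (m : V →ₗ[K] V →ₗ[K] V) (x y : V) : Module.End K V :=
  2 • (m (m x y) : Module.End K V) + 2 • ⁅(m x : Module.End K V), (m y : Module.End K V)⁆

/-- A derivation of the (Jordan) algebra `(V, m)`. -/
def IsDeriv (m : V →ₗ[K] V →ₗ[K] V) (D : Module.End K V) : Prop :=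
  ∀ x y, D (m x y) = m (D x) y + m x (D y)

/-- A pair derivation `(D⁺, D⁻)` of the Jordan algebra `(V, m)`. -/
def IsPairDer (m : V →ₗ[K] V →ₗ[K] V) (Dp Dm : Module.End K V) : Prop :=
  ∀ x y z,
    Dp (triple m x y z)
      = triple m (Dp x) y z + triple m x (Dm y) z + triple m x y (Dp z) ∧
    Dm (triple m x y z)
      = triple m (Dm x) y z + triple m x (Dp y) z + triple m x y (Dm z)

/-- For a unital Jordan algebra, every pair derivation decomposes uniquely as
`(L_a + D, -L_a + D)` with `D` a derivation; conversely every such pair is a pair derivation;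
and `L_a + D ↦ (L_a + D, -L_a + D)` (equivalently `A ↦ (A, A - 2 L_{A(e)})` on `str(V)`)
is a Lie algebra isomorphism from `str(V)` onto `Der(V,V)`. -/
theorem stmt0
    (h2 : (2 : K) ≠ 0) (h3 : (3 : K) ≠ 0)
    (m : V →ₗ[K] V →ₗ[K] V)
    (hcomm : ∀ x y : V, m x y = m y x)
    (hJordan : ∀ x y z : V,
      ⁅(m x : Module.End K V), m (m y z)⁆ + ⁅(m y : Module.End K V), m (m z x)⁆
        + ⁅(m z : Module.End K V), m (m x y)⁆ = 0)
    (e : V) (he : ∀ x : V, m e x = x) :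
    (∀ Dp Dm : Module.End K V, IsPairDer m Dp Dm →
      ∃! p : V × Module.End K V,
        IsDeriv m p.2 ∧ Dp = m p.1 + p.2 ∧ Dm = - m p.1 + p.2) ∧
    (∀ (a : V) (D : Module.End K V), IsDeriv m D →
      IsPairDer m (m a + D) (- m a + D)) ∧
    Set.BijOn (fun A : Module.End K V => (A, A - (2 : K) • (m (A e) : Module.End K V)))
      {A : Module.End K V | ∃ a D, IsDeriv m D ∧ A = m a + D}
      {p : Module.End K V × Module.End K V | IsPairDer m p.1 p.2} ∧
    (∀ A B : Module.End K V,
      A ∈ {A : Module.End K V | ∃ a D, IsDeriv m D ∧ A = m a + D} →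
      B ∈ {A : Module.End K V | ∃ a D, IsDeriv m D ∧ A = m a + D} →
      ⁅A, B⁆ - (2 : K) • (m (⁅A, B⁆ e) : Module.End K V)
        = ⁅A - (2 : K) • (m (A e) : Module.End K V),
           B - (2 : K) • (m (B e) : Module.End K V)⁆) := by
  have hme : ∀ x : V, m x e = x := fun x => (hcomm x e).trans (he x)
  -- pointwise Jordan identity
  have hJ : ∀ u v w t : V,
      m u (m (m v w) t) - m (m v w) (m u t) + (m v (m (m w u) t) - m (m w u) (m v t))
        + (m w (m (m u v) t) - m (m u v) (m w t)) = 0 := by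
    intro u v w t
    have h := DFunLike.congr_fun (hJordan u v w) t
    simp only [Ring.lie_def, LinearMap.add_apply, LinearMap.sub_apply, Module.End.mul_apply,
      LinearMap.zero_apply] at h
    linear_combination (norm := module) h
  -- the key identity:  a{x,y,z} = {ax,y,z} - {x,ay,z} + {x,y,az}  (elementwise, divided by 2)
  have hkey : ∀ a x y z : V,
      m a (m (m x y) z) + m a (m x (m y z)) - m a (m y (m x z))
        = (m (m (m a x) y) z + m (m a x) (m y z) - m y (m (m a x) z))
          - (m (m x (m a y)) z + m x (m (m a y) z) - m (m a y) (m x z))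
          + (m (m x y) (m a z) + m x (m y (m a z)) - m y (m x (m a z))) := by
    intro a x y z
    have h1 := hJ a y z x
    have h2' := hJ a x z y
    have h3' := hJ a x y z
    have c0 : (m a (m x (m y z))) = (m a (m (m y z) x)) := by rw [hcomm x (m y z)]
    have c1 : (m (m x (m a y)) z) = (m z (m (m a y) x)) := by
      rw [hcomm x (m a y), hcomm (m (m a y) x) z]
    have c2 : (m x (m (m a y) z)) = (m x (m (m y a) z)) := by rw [hcomm a y]
    have c3 : (m y (m x (m a z))) = (m y (m (m z a) x)) := by rw [hcomm a z, hcomm x (m z a)]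
    have c4 : (m (m y z) (m a x)) = (m (m a x) (m z y)) := by
      rw [hcomm y z, hcomm (m z y) (m a x)]
    have c5 : (m (m z a) (m y x)) = (m (m z a) (m x y)) := by rw [hcomm y x]
    have c6 : (m (m a y) (m z x)) = (m (m a y) (m x z)) := by rw [hcomm z x]
    have c7 : (m a (m (m x z) y)) = (m a (m y (m x z))) := by rw [hcomm (m x z) y]
    have c8 : (m x (m (m z a) y)) = (m x (m y (m a z))) := by rw [hcomm z a, hcomm (m a z) y]
    have c9 : (m z (m (m a x) y)) = (m (m (m a x) y) z) := by rw [hcomm z (m (m a x) y)]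
    have c10 : (m (m y a) (m x z)) = (m (m x z) (m a y)) := by
      rw [hcomm y a, hcomm (m a y) (m x z)]
    linear_combination (norm := module)
      h1 - h2' + h3' + c0 + c1 + c2 + c3 + c4 + c5 + c6 + c7 + c8 + c9 + c10
  -- multiplication identity at the triple level
  have hL3 : ∀ a x y z : V, m a (triple m x y z)
      = triple m (m a x) y z - triple m x (m a y) z + triple m x y (m a z) := by
    intro a x y z
    simp only [triple]
    rw [map_nsmul, map_sub, map_add, hkey a x y z]
    abel
  -- linearity of triple in each slot
  have ta1 : ∀ u v y z : V, triple m (u + v) y z = triple m u y z + triple m v y z := by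
    intro u v y z; simp only [triple, map_add, LinearMap.add_apply]; abel
  have ta2 : ∀ x u v z : V, triple m x (u + v) z = triple m x u z + triple m x v z := by
    intro x u v z; simp only [triple, map_add, LinearMap.add_apply]; abel
  have ta3 : ∀ x y u v : V, triple m x y (u + v) = triple m x y u + triple m x y v := by
    intro x y u v; simp only [triple, map_add, LinearMap.add_apply]; abel
  have tn1 : ∀ u y z : V, triple m (-u) y z = - triple m u y z := by
    intro u y z; simp only [triple, map_neg, LinearMap.neg_apply]; abel
  have tn2 : ∀ x u z : V, triple m x (-u) z = - triple m x u z := by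
    intro x u z; simp only [triple, map_neg, LinearMap.neg_apply]; abel
  have tn3 : ∀ x y u : V, triple m x y (-u) = - triple m x y u := by
    intro x y u; simp only [triple, map_neg, LinearMap.neg_apply]; abel
  have ts1 : ∀ u v y z : V, triple m (u - v) y z = triple m u y z - triple m v y z := by
    intro u v y z; simp only [triple, map_sub, LinearMap.sub_apply]; abel
  have ts2 : ∀ x u v z : V, triple m x (u - v) z = triple m x u z - triple m x v z := by
    intro x u v z; simp only [triple, map_sub, LinearMap.sub_apply]; abel
  have ts3 : ∀ x y u v : V, triple m x y (u - v) = triple m x y u - triple m x y v := by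
    intro x y u v; simp only [triple, map_sub, LinearMap.sub_apply]; abel
  have tz2 : ∀ x z : V, triple m x 0 z = 0 := by
    intro x z; simp [triple]
  -- derivations satisfy Leibniz for the triple product
  have hD3 : ∀ (D : Module.End K V), IsDeriv m D → ∀ x y z : V,
      D (triple m x y z) = triple m (D x) y z + triple m x (D y) z + triple m x y (D z) := by
    intro D hD x y z
    have hD' : ∀ x y, D (m x y) = m (D x) y + m x (D y) := hD
    simp only [triple, map_nsmul, map_sub, map_add, hD', LinearMap.add_apply]
    abel
  -- special values of the triple product
  have htre : ∀ x z : V, triple m x e z = 2 • m x z := by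
    intro x z
    simp only [triple, he, hme]
    abel
  have htre2 : ∀ y z : V, triple m e y z = 2 • m y z := by
    intro y z
    simp only [triple, he, hme]
    abel
  have htre3 : ∀ x y : V, triple m x y e = 2 • m x y := by
    intro x y
    simp only [triple, he, hme]
    rw [hcomm y x]
    abel
  -- derivations kill the unit
  have hDe0 : ∀ D : Module.End K V, IsDeriv m D → D e = 0 := by
    intro D hD
    have h := hD e e
    rw [he e, hme (D e), he (D e)] at h
    exact add_eq_left.mp h.symm
  have hstre : ∀ (a : V) (D : Module.End K V), IsDeriv m D → (m a + D) e = a := by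
    intro a D hD
    rw [LinearMap.add_apply, hDe0 D hD, add_zero, hme]
  -- cancellation helpers
  have cancel2 : ∀ u v : V, (2 : ℕ) • u = (2 : ℕ) • v → u = v := by
    intro u v h
    have h' : ((2 : ℕ) : K) • u = ((2 : ℕ) : K) • v := by
      rw [Nat.cast_smul_eq_nsmul, Nat.cast_smul_eq_nsmul]; exact h
    have h20 : ((2 : ℕ) : K) ≠ 0 := by simpa using h2
    exact smul_right_injective V h20 h'
  have cancel4 : ∀ u v : V, (4 : ℕ) • u = (4 : ℕ) • v → u = v := by
    intro u v h
    have h' : ((4 : ℕ) : K) • u = ((4 : ℕ) : K) • v := by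
      rw [Nat.cast_smul_eq_nsmul, Nat.cast_smul_eq_nsmul]; exact h
    have h40 : ((4 : ℕ) : K) ≠ 0 := by
      have : ((4 : ℕ) : K) = (2 : K) * 2 := by norm_num
      rw [this]; exact mul_ne_zero h2 h2
    exact smul_right_injective V h40 h'
  -- PART 2 first (used in part 3)
  have part2 : ∀ (a : V) (D : Module.End K V), IsDeriv m D →
      IsPairDer m (m a + D) (- m a + D) := by
    intro a D hD x y z
    have hDt := hD3 D hD x y z
    have hLt := hL3 a x y z
    constructor
    · simp only [LinearMap.add_apply, LinearMap.neg_apply, ta1, ta2, ta3, tn1, tn2, tn3]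
      rw [hDt, hLt]; abel
    · simp only [LinearMap.add_apply, LinearMap.neg_apply, ta1, ta2, ta3, tn1, tn2, tn3]
      rw [hDt, hLt]; abel
  -- PART 1
  have part1 : ∀ Dp Dm : Module.End K V, IsPairDer m Dp Dm →
      ∃! p : V × Module.End K V,
        IsDeriv m p.2 ∧ Dp = m p.1 + p.2 ∧ Dm = - m p.1 + p.2 := by
    intro Dp Dm hPD
    have hS : ∀ x y z : V, (Dp + Dm) (triple m x y z)
        = triple m ((Dp + Dm) x) y z + triple m x ((Dp + Dm) y) z
          + triple m x y ((Dp + Dm) z) := by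
      intro x y z
      have hq1 := (hPD x y z).1
      have hq2 := (hPD x y z).2
      simp only [LinearMap.add_apply, ta1, ta2, ta3]
      rw [hq1, hq2]; abel
    have hT : ∀ x y z : V, (Dp - Dm) (triple m x y z)
        = triple m ((Dp - Dm) x) y z - triple m x ((Dp - Dm) y) z
          + triple m x y ((Dp - Dm) z) := by
      intro x y z
      have hq1 := (hPD x y z).1
      have hq2 := (hPD x y z).2
      simp only [LinearMap.sub_apply, ts1, ts2, ts3]
      rw [hq1, hq2]; abel
    have hSe : (Dp + Dm) e = 0 := by
      have h := hS e e e
      simp only [htre, htre2, htre3, he, hme] at h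
      rw [map_nsmul] at h
      have h4 : (4 : ℕ) • ((Dp + Dm) e) = 0 := by
        linear_combination (norm := module) -h
      have h4' : ((4 : ℕ) : K) • ((Dp + Dm) e) = 0 := by
        rw [Nat.cast_smul_eq_nsmul]; exact h4
      have h40 : ((4 : ℕ) : K) ≠ 0 := by
        have : ((4 : ℕ) : K) = (2 : K) * 2 := by norm_num
        rw [this]; exact mul_ne_zero h2 h2
      rcases smul_eq_zero.mp h4' with hc | hc
      · exact absurd hc h40
      · exact hc
    have hSmul : ∀ x z : V, (Dp + Dm) (m x z)
        = m ((Dp + Dm) x) z + m x ((Dp + Dm) z) := by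
      intro x z
      have h := hS x e z
      rw [hSe] at h
      simp only [htre, tz2, add_zero] at h
      rw [map_nsmul] at h
      apply cancel2
      rw [smul_add]
      exact h
    have hTmul : ∀ x : V, (Dp - Dm) x = m ((Dp - Dm) e) x := by
      intro x
      have h := hT e x e
      rw [htre2 x e, hme x, htre3 ((Dp - Dm) e) x, htre2 ((Dp - Dm) x) e,
        hme ((Dp - Dm) x), htre2 x ((Dp - Dm) e)] at h
      rw [map_nsmul] at h
      have hc := hcomm x ((Dp - Dm) e)
      apply cancel4
      linear_combination (norm := module) h + hc + hc
    refine ⟨⟨(2 : K)⁻¹ • ((Dp - Dm) e), (2 : K)⁻¹ • (Dp + Dm)⟩, ⟨?_, ?_, ?_⟩, ?_⟩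
    · intro x y
      simp only [LinearMap.smul_apply, map_smul]
      rw [hSmul x y, smul_add]
    · ext x
      simp only [LinearMap.add_apply, LinearMap.smul_apply, map_smul]
      rw [← hTmul x, LinearMap.sub_apply]
      match_scalars <;> (try field_simp) <;> (try norm_num) <;> try ring
    · ext x
      simp only [LinearMap.add_apply, LinearMap.neg_apply, LinearMap.smul_apply, map_smul]
      rw [← hTmul x, LinearMap.sub_apply]
      match_scalars <;> (try field_simp) <;> (try norm_num) <;> try ring
    · rintro ⟨a', D'⟩ ⟨hD', hp, hm⟩
      have hae : a' = (2 : K)⁻¹ • ((Dp - Dm) e) := by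
        have h : (Dp - Dm) e = a' + a' := by
          rw [hp, hm]
          simp only [LinearMap.sub_apply, LinearMap.add_apply, LinearMap.neg_apply,
            hDe0 D' hD', hme, add_zero]
          abel
        rw [h]
        match_scalars <;> (try field_simp) <;> (try norm_num) <;> try ring
      have hDe' : D' = (2 : K)⁻¹ • (Dp + Dm) := by
        ext x
        rw [hp, hm]
        simp only [LinearMap.smul_apply, LinearMap.add_apply, LinearMap.neg_apply]
        match_scalars <;> (try field_simp) <;> (try norm_num) <;> try ring
      exact Prod.ext hae hDe'
  -- derivation/multiplication commutator
  have hder_mul : ∀ D : Module.End K V, IsDeriv m D → ∀ c : V,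
      ⁅D, (m c : Module.End K V)⁆ = m (D c) := by
    intro D hD c
    ext x
    have hD' : ∀ x y, D (m x y) = m (D x) y + m x (D y) := hD
    simp only [Ring.lie_def, LinearMap.sub_apply, Module.End.mul_apply, hD']
    abel
  refine ⟨part1, part2, ⟨?_, ?_, ?_⟩, ?_⟩
  · -- MapsTo
    rintro A ⟨a, D, hD, rfl⟩
    simp only [Set.mem_setOf_eq]
    have h2nd : (m a + D) - (2 : K) • (m ((m a + D) e) : Module.End K V) = - m a + D := by
      rw [hstre a D hD, two_smul]
      abel
    rw [h2nd]
    exact part2 a D hD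
  · -- InjOn
    intro A _ B _ h
    exact congrArg Prod.fst h
  · -- SurjOn
    intro p hp
    obtain ⟨⟨a, D⟩, ⟨hD, hp1, hp2⟩, -⟩ := part1 p.1 p.2 hp
    refine ⟨p.1, ⟨a, D, hD, hp1⟩, ?_⟩
    have he1 : p.1 e = a := by rw [hp1]; exact hstre a D hD
    apply Prod.ext
    · rfl
    · show p.1 - (2 : K) • (m (p.1 e) : Module.End K V) = p.2
      rw [he1, hp1, hp2, two_smul]
      abel
  · -- Lie homomorphism property
    rintro A B ⟨a, D, hD, rfl⟩ ⟨b, E, hE, rfl⟩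
    have hABe : (⁅m a + D, m b + E⁆ : Module.End K V) e = D b - E a := by
      simp only [Ring.lie_def, LinearMap.sub_apply, Module.End.mul_apply, LinearMap.add_apply,
        hDe0 D hD, hDe0 E hE, add_zero, hme]
      rw [hcomm a b]
      abel
    rw [hABe, hstre a D hD, hstre b E hE, map_sub, ← hder_mul D hD b, ← hder_mul E hE a]
    simp only [Ring.lie_def, two_smul, smul_sub]
    noncomm_ring
end

section
/- Let V be a unital Jordan algebra over K. The projection onto the first component, (A,B) ↦ A, restricts to a Lie algebra isomorphism from Inn(V,V) onto the inner structure algebra istr(V). In particular, for all x,y ∈ V one has L_x = (1/2)·D_{x,e} and [L_x, L_y] = (1/4)·(D_{x,y} − D_{y,x}). -/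
variable {K V : Type*} [Field K] [AddCommGroup V] [Module K V]

/-!
For a unital commutative algebra, `D_{x,y} e = 2xy`, so `D_{x,y} = 2 L_{xy} + 2[L_x, L_y]`
and `-D_{y,x} = -2 L_{xy} + 2[L_x, L_y]` give `-D_{y,x} = D_{x,y} - 2 L_{D_{x,y} e}`.
Hence `Inn(V,V)` lies in the graph of the linear map `A ↦ A - 2 L_{A e}`, on which the first
projection is injective. Its image is spanned by the `D_{x,y}`, which span `istr(V)` because
`L_x = D_{x,e}/2` and `[L_x, L_y] = (D_{x,y} - D_{y,x})/4`.
-/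

open LinearMap Submodule

/-- `Inn(V,V)`. -/
def innPairs (m : V →ₗ[K] V →ₗ[K] V) : Submodule K (Module.End K V × Module.End K V) :=
  span K {p | ∃ x y, p = (Dop m x y, -Dop m y x)}

/-- `istr(V)`. -/
def innerStructure (m : V →ₗ[K] V →ₗ[K] V) : Submodule K (Module.End K V) :=
  span K ({A | ∃ x, A = m x} ∪ {A | ∃ x y, A = ⁅(m x : Module.End K V), (m y : Module.End K V)⁆})

def secondComponent (m : V →ₗ[K] V →ₗ[K] V) (e : V) : Module.End K V →ₗ[K] Module.End K V :=
  LinearMap.id - 2 • m.comp (LinearMap.applyₗ e)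

theorem injOn_fst_graph {M N : Type*} [AddCommGroup M] [AddCommGroup N] [Module K M]
    [Module K N] (f : M →ₗ[K] N) : Set.InjOn Prod.fst (f.graph : Set (M × N)) := by
  intro p hp q hq h
  rw [SetLike.mem_coe, mem_graph_iff] at hp hq
  exact Prod.ext h (by rw [hp, hq, h])

section UnitalCommutative

variable {m : V →ₗ[K] V →ₗ[K] V} (hcomm : ∀ x y : V, m x y = m y x)
include hcomm

theorem Dop_sub_Dop_swap (x y : V) :
    Dop m x y - Dop m y x = (4 : K) • ⁅(m x : Module.End K V), (m y : Module.End K V)⁆ := by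
  rw [Dop, Dop, hcomm y x, Ring.lie_def, Ring.lie_def,
    show (4 : K) = ((4 : ℕ) : K) by norm_num, Nat.cast_smul_eq_nsmul]
  abel

variable {e : V} (he : ∀ x : V, m e x = x)
include he

theorem Dop_unit_right (x : V) : Dop m x e = (2 : K) • (m x : Module.End K V) := by
  have hme : (m e : Module.End K V) = 1 := LinearMap.ext he
  rw [Dop, hcomm x e, he, hme, Ring.lie_def, mul_one, one_mul, sub_self, smul_zero, add_zero,
    show (2 : K) = ((2 : ℕ) : K) by norm_num, Nat.cast_smul_eq_nsmul]

theorem neg_Dop_swap_eq (x y : V) :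
    -Dop m y x = Dop m x y - 2 • (m (Dop m x y e) : Module.End K V) := by
  have hDe : Dop m x y e = 2 • m x y := by
    simp [Dop, Ring.lie_def, hcomm _ e, he, hcomm x y]
  rw [hDe, map_nsmul, Dop, Dop, hcomm y x, Ring.lie_def, Ring.lie_def]
  abel

theorem innPairs_le_graph : innPairs m ≤ (secondComponent m e).graph := by
  rw [innPairs, span_le]
  rintro _ ⟨x, y, rfl⟩
  exact (neg_Dop_swap_eq hcomm he x y).trans rfl

variable (h2 : (2 : K) ≠ 0)
include h2

theorem lmul_eq_inv_two_smul_Dop (x : V) :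
    (m x : Module.End K V) = (2 : K)⁻¹ • Dop m x e := by
  rw [Dop_unit_right hcomm he, inv_smul_smul₀ h2]

omit he in
theorem lie_lmul_eq_inv_four_smul (x y : V) :
    ⁅(m x : Module.End K V), (m y : Module.End K V)⁆ = (4 : K)⁻¹ • (Dop m x y - Dop m y x) := by
  have h4 : (4 : K) ≠ 0 := by
    rw [show (4 : K) = 2 * 2 by norm_num]
    exact mul_ne_zero h2 h2
  rw [Dop_sub_Dop_swap hcomm, inv_smul_smul₀ h4]

theorem span_Dop_eq_innerStructure : span K {A | ∃ x y, A = Dop m x y} = innerStructure m := by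
  have hDop_mem : ∀ x y, Dop m x y ∈ span K {A | ∃ x y, A = Dop m x y} :=
    fun x y => subset_span ⟨x, y, rfl⟩
  apply le_antisymm
  · rw [span_le]
    rintro _ ⟨x, y, rfl⟩
    refine add_mem (nsmul_mem ?_ 2) (nsmul_mem ?_ 2)
    · exact subset_span (Or.inl ⟨m x y, rfl⟩)
    · exact subset_span (Or.inr ⟨x, y, rfl⟩)
  · rw [innerStructure, span_le]
    rintro _ (⟨x, rfl⟩ | ⟨x, y, rfl⟩)
    · rw [lmul_eq_inv_two_smul_Dop hcomm he h2]
      exact smul_mem _ _ (hDop_mem x e)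
    · rw [lie_lmul_eq_inv_four_smul hcomm h2]
      exact smul_mem _ _ (sub_mem (hDop_mem x y) (hDop_mem y x))

theorem map_fst_innPairs : (innPairs m).map (LinearMap.fst K _ _) = innerStructure m := by
  rw [innPairs, Submodule.map_span, ← span_Dop_eq_innerStructure hcomm he h2]
  congr 1
  ext A
  constructor
  · rintro ⟨_, ⟨x, y, rfl⟩, rfl⟩
    exact ⟨x, y, rfl⟩
  · rintro ⟨x, y, rfl⟩
    exact ⟨_, ⟨x, y, rfl⟩, rfl⟩

end UnitalCommutative

theorem stmt1_general
    (h2 : (2 : K) ≠ 0)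
    (m : V →ₗ[K] V →ₗ[K] V)
    (hcomm : ∀ x y : V, m x y = m y x)
    (e : V) (he : ∀ x : V, m e x = x) :
    Set.BijOn (Prod.fst : Module.End K V × Module.End K V → Module.End K V)
      (Submodule.span K {p : Module.End K V × Module.End K V |
          ∃ x y, p = (Dop m x y, - Dop m y x)} : Set _)
      (Submodule.span K ({A : Module.End K V | ∃ x, A = m x} ∪
          {A : Module.End K V | ∃ x y, A = ⁅(m x : Module.End K V), (m y : Module.End K V)⁆})
        : Set _) ∧
    (∀ x : V, (m x : Module.End K V) = (2 : K)⁻¹ • Dop m x e) ∧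
    (∀ x y : V, ⁅(m x : Module.End K V), (m y : Module.End K V)⁆
        = (4 : K)⁻¹ • (Dop m x y - Dop m y x)) := by
  refine ⟨?_, lmul_eq_inv_two_smul_Dop hcomm he h2, lie_lmul_eq_inv_four_smul hcomm h2⟩
  show Set.BijOn Prod.fst (innPairs m : Set (Module.End K V × Module.End K V))
    (innerStructure m : Set (Module.End K V))
  have hinj : Set.InjOn Prod.fst (innPairs m : Set (Module.End K V × Module.End K V)) :=
    (injOn_fst_graph _).mono (innPairs_le_graph hcomm he)
  rw [← map_fst_innPairs hcomm he h2, map_coe, LinearMap.coe_fst]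
  exact hinj.bijOn_image

/-- For a unital Jordan algebra, projection onto the first component is a
Lie algebra isomorphism from `Inn(V,V)` onto `istr(V)`; in particular
`L_x = (1/2) D_{x,e}` and `[L_x, L_y] = (1/4)(D_{x,y} - D_{y,x})`. -/
theorem stmt1
    (h2 : (2 : K) ≠ 0) (h3 : (3 : K) ≠ 0)
    (m : V →ₗ[K] V →ₗ[K] V)
    (hcomm : ∀ x y : V, m x y = m y x)
    (hJordan : ∀ x y z : V,
      ⁅(m x : Module.End K V), m (m y z)⁆ + ⁅(m y : Module.End K V), m (m z x)⁆
        + ⁅(m z : Module.End K V), m (m x y)⁆ = 0)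
    (e : V) (he : ∀ x : V, m e x = x) :
    Set.BijOn (Prod.fst : Module.End K V × Module.End K V → Module.End K V)
      (Submodule.span K {p : Module.End K V × Module.End K V |
          ∃ x y, p = (Dop m x y, - Dop m y x)} : Set _)
      (Submodule.span K ({A : Module.End K V | ∃ x, A = m x} ∪
          {A : Module.End K V | ∃ x y, A = ⁅(m x : Module.End K V), (m y : Module.End K V)⁆})
        : Set _) ∧
    (∀ x : V, (m x : Module.End K V) = (2 : K)⁻¹ • Dop m x e) ∧
    (∀ x y : V, ⁅(m x : Module.End K V), (m y : Module.End K V)⁆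
        = (4 : K)⁻¹ • (Dop m x y - Dop m y x)) :=
  stmt1_general h2 m hcomm e he
end

section
/- Let V be a Jordan algebra over K and assume that for every x ∈ V, if L_x is a derivation of V then L_x = 0. Then {L_x : x ∈ V} ∩ Der(V) = {0}, and the map sending L_a + D (with a ∈ V, D ∈ Der(V)) to the pair (L_a + D, −L_a + D) is a well-defined injective Lie algebra homomorphism from the structure algebra str(V) into Der(V,V). -/
variable {K V : Type*} [Field K] [AddCommGroup V] [Module K V]

/-! The Jordan identity gives `L_a{x,y,z} = {ax,y,z} - {x,ay,z} + {x,y,az}`, so `(L_a, -L_a)` is a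
pair derivation, as is `(D, D)` for every derivation `D`. Since no nonzero `L_a` is a derivation,
`str(V) = L(V) ⊕ Der(V)` and `L_a + D ↦ (L_a + D, -L_a + D)` is well defined. It is a Lie
homomorphism because `[L_a + D, L_b + E] = L_{Db - Ea} + ([L_a, L_b] + [D, E])`, where
`[L_a, L_b]` is again a derivation. -/

structure IsJordanMul (m : V →ₗ[K] V →ₗ[K] V) : Prop where
  comm : ∀ x y : V, m x y = m y x
  jordan : ∀ x y z : V,
    ⁅(m x : Module.End K V), m (m y z)⁆ + ⁅(m y : Module.End K V), m (m z x)⁆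
      + ⁅(m z : Module.End K V), m (m x y)⁆ = 0

section Derivation

variable {m : V →ₗ[K] V →ₗ[K] V} {D E : Module.End K V}

theorem isDeriv_iff_lie_mul : IsDeriv m D ↔ ∀ b, ⁅D, (m b : Module.End K V)⁆ = m (D b) := by
  refine forall_congr' fun b => ?_
  rw [LinearMap.ext_iff]
  refine forall_congr' fun x => ?_
  simp only [Ring.lie_def, LinearMap.sub_apply, Module.End.mul_apply]
  exact ⟨fun h => by rw [h, add_sub_cancel_right], fun h => by rw [← h, sub_add_cancel]⟩

theorem IsDeriv.lie_mul (hD : IsDeriv m D) (b : V) :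
    ⁅D, (m b : Module.End K V)⁆ = m (D b) :=
  isDeriv_iff_lie_mul.1 hD b

theorem IsDeriv.add (hD : IsDeriv m D) (hE : IsDeriv m E) : IsDeriv m (D + E) := by
  intro x y
  simp only [LinearMap.add_apply, hD x y, hE x y, map_add]
  abel

theorem IsDeriv.sub (hD : IsDeriv m D) (hE : IsDeriv m E) : IsDeriv m (D - E) := by
  intro x y
  simp only [LinearMap.sub_apply, hD x y, hE x y, map_sub]
  abel

theorem IsDeriv.lie (hD : IsDeriv m D) (hE : IsDeriv m E) : IsDeriv m ⁅D, E⁆ := by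
  intro x y
  simp only [Ring.lie_def, LinearMap.sub_apply, Module.End.mul_apply, map_add, map_sub, hD _ _,
    hE _ _]
  module

theorem IsDeriv.map_triple (hD : IsDeriv m D) (x y z : V) :
    D (triple m x y z) = triple m (D x) y z + triple m x (D y) z + triple m x y (D z) := by
  simp only [triple, map_nsmul, map_add, map_sub, hD _ _, LinearMap.add_apply]
  module

theorem IsDeriv.isPairDer (hD : IsDeriv m D) : IsPairDer m D D :=
  fun x y z => ⟨hD.map_triple x y z, hD.map_triple x y z⟩

end Derivation

theorem IsPairDer.add {m : V →ₗ[K] V →ₗ[K] V} {Dp Dm Ep Em : Module.End K V}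
    (hD : IsPairDer m Dp Dm) (hE : IsPairDer m Ep Em) : IsPairDer m (Dp + Ep) (Dm + Em) := by
  intro x y z
  obtain ⟨hDp, hDm⟩ := hD x y z
  obtain ⟨hEp, hEm⟩ := hE x y z
  simp only [triple, LinearMap.add_apply, map_add] at *
  constructor
  · linear_combination (norm := module) hDp + hEp
  · linear_combination (norm := module) hDm + hEm

namespace IsJordanMul

variable {m : V →ₗ[K] V →ₗ[K] V}

theorem jordan_apply (hm : IsJordanMul m) (x y z w : V) :
    m x (m (m y z) w) + m y (m (m z x) w) + m z (m (m x y) w)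
      = m (m y z) (m x w) + m (m z x) (m y w) + m (m x y) (m z w) := by
  have h := LinearMap.congr_fun (hm.jordan x y z) w
  simp only [Ring.lie_def, LinearMap.add_apply, LinearMap.sub_apply, Module.End.mul_apply,
    LinearMap.zero_apply] at h
  linear_combination (norm := module) h

theorem lie_mul_lie_mul (hm : IsJordanMul m) (a x y : V) :
    ⁅(m a : Module.End K V), ⁅(m x : Module.End K V), m y⁆⁆
      = m (m (m a x) y - m (m a y) x) := by
  ext w
  have hA := hm.jordan_apply a y w x
  have hB := hm.jordan_apply a x w y
  rw [hm.comm (m y w) x, hm.comm w a, hm.comm (m a w) x, hm.comm w (m (m a y) x), hm.comm y x,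
    hm.comm w x] at hA
  rw [hm.comm (m x w) y, hm.comm w a, hm.comm (m a w) y, hm.comm w (m (m a x) y), hm.comm w y,
    hm.comm (m a x) (m y w), hm.comm (m x w) (m a y)] at hB
  simp only [Ring.lie_def, LinearMap.sub_apply, Module.End.mul_apply, map_sub]
  linear_combination (norm := module) hA - hB

theorem isDeriv_lie_mul_mul (hm : IsJordanMul m) (x y : V) :
    IsDeriv m ⁅(m x : Module.End K V), m y⁆ := by
  refine isDeriv_iff_lie_mul.2 fun b => LinearMap.ext fun w => ?_
  have h := LinearMap.congr_fun (hm.lie_mul_lie_mul b x y) w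
  rw [hm.comm (m b y), hm.comm b y, hm.comm (m b x), hm.comm b x] at h
  simp only [Ring.lie_def, LinearMap.sub_apply, Module.End.mul_apply, map_sub] at h ⊢
  linear_combination (norm := module) -h

theorem mul_triple (hm : IsJordanMul m) (a x y z : V) :
    m a (triple m x y z)
      = triple m (m a x) y z - triple m x (m a y) z + triple m x y (m a z) := by
  have hJ := hm.jordan_apply a x y z
  have hK := LinearMap.congr_fun (hm.lie_mul_lie_mul a x y) z
  simp only [Ring.lie_def, LinearMap.sub_apply, Module.End.mul_apply, map_sub] at hK
  rw [hm.comm y a] at hJ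
  simp only [triple, map_nsmul, map_add, map_sub]
  rw [hm.comm x (m a y)]
  linear_combination (norm := module) 2 • hJ + 2 • hK

theorem isPairDer_mul_neg_mul (hm : IsJordanMul m) (a : V) :
    IsPairDer m (m a) (-m a) := by
  intro x y z
  simp only [LinearMap.neg_apply, hm.mul_triple]
  simp only [triple, map_neg, LinearMap.neg_apply]
  constructor <;> module

end IsJordanMul

section StructureAlgebra

attribute [local instance] LieRing.ofAssociativeRing

variable {m : V →ₗ[K] V →ₗ[K] V} {D E : Module.End K V}

theorem lie_mul_add_mul_add (hD : IsDeriv m D) (hE : IsDeriv m E) (a b : V) :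
    ⁅(m a : Module.End K V) + D, (m b : Module.End K V) + E⁆
      = m (D b - E a) + (⁅(m a : Module.End K V), m b⁆ + ⁅D, E⁆) := by
  rw [map_sub, add_lie, lie_add, lie_add, hD.lie_mul b, ← lie_skew (m a : Module.End K V) E,
    hE.lie_mul a]
  abel

theorem lie_neg_mul_add_neg_mul_add (hD : IsDeriv m D) (hE : IsDeriv m E) (a b : V) :
    ⁅-(m a : Module.End K V) + D, -(m b : Module.End K V) + E⁆
      = -m (D b - E a) + (⁅(m a : Module.End K V), m b⁆ + ⁅D, E⁆) := by
  rw [← map_neg (m : V →ₗ[K] Module.End K V) (D b - E a), neg_sub]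
  simpa only [map_neg, neg_lie, lie_neg, neg_neg, neg_sub_neg]
    using lie_mul_add_mul_add hD hE (-a) (-b)

theorem mul_eq_mul_of_add_eq_add (hL : ∀ x : V, IsDeriv m (m x) → (m x : Module.End K V) = 0)
    (hD : IsDeriv m D) (hE : IsDeriv m E) {a b : V}
    (h : (m a : Module.End K V) + D = m b + E) : (m a : Module.End K V) = m b := by
  have hab : (m (a - b) : Module.End K V) = E - D := by
    rw [map_sub, sub_eq_sub_iff_add_eq_add, h, add_comm]
  have h0 := hL (a - b) (hab ▸ hE.sub hD)
  rwa [map_sub, sub_eq_zero] at h0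

variable (m) in
open Classical in
/-- The component `L_a` of `A = L_a + D ∈ str(V)`; junk value `0` outside `str(V)`. -/
noncomputable def mulPart (A : Module.End K V) : Module.End K V :=
  if h : ∃ a D, IsDeriv m D ∧ A = m a + D then m h.choose else 0

theorem mulPart_mul_add (hL : ∀ x : V, IsDeriv m (m x) → (m x : Module.End K V) = 0)
    (hD : IsDeriv m D) (a : V) : mulPart m (m a + D) = m a := by
  have h : ∃ a' D', IsDeriv m D' ∧ (m a : Module.End K V) + D = m a' + D' := ⟨a, D, hD, rfl⟩
  obtain ⟨D', hD', hEq⟩ := h.choose_spec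
  rw [mulPart, dif_pos h]
  exact mul_eq_mul_of_add_eq_add hL hD' hD hEq.symm

end StructureAlgebra

theorem stmt2_general
    (m : V →ₗ[K] V →ₗ[K] V)
    (hcomm : ∀ x y : V, m x y = m y x)
    (hJordan : ∀ x y z : V,
      ⁅(m x : Module.End K V), m (m y z)⁆ + ⁅(m y : Module.End K V), m (m z x)⁆
        + ⁅(m z : Module.End K V), m (m x y)⁆ = 0)
    (hL : ∀ x : V, IsDeriv m (m x) → (m x : Module.End K V) = 0) :
    (∀ A : Module.End K V, (∃ x, A = m x) → IsDeriv m A → A = 0) ∧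
    ∃ f : Module.End K V → Module.End K V × Module.End K V,
      (∀ (a : V) (D : Module.End K V), IsDeriv m D →
        f (m a + D) = (m a + D, - m a + D)) ∧
      Set.InjOn f {A : Module.End K V | ∃ a D, IsDeriv m D ∧ A = m a + D} ∧
      (∀ (a : V) (D : Module.End K V), IsDeriv m D →
        IsPairDer m (m a + D) (- m a + D)) ∧
      (∀ A B : Module.End K V,
        A ∈ {A : Module.End K V | ∃ a D, IsDeriv m D ∧ A = m a + D} →
        B ∈ {A : Module.End K V | ∃ a D, IsDeriv m D ∧ A = m a + D} →
        f ⁅A, B⁆ = (⁅(f A).1, (f B).1⁆, ⁅(f A).2, (f B).2⁆)) := by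
  have hm : IsJordanMul m := ⟨hcomm, hJordan⟩
  let f (A : Module.End K V) : Module.End K V × Module.End K V := (A, A - 2 • mulPart m A)
  have hf (a : V) (D : Module.End K V) (hD : IsDeriv m D) :
      f (m a + D) = (m a + D, -m a + D) := by
    simp only [f, mulPart_mul_add hL hD, Prod.mk.injEq, true_and]
    abel
  refine ⟨?_, f, hf, fun A _ B _ h => congrArg Prod.fst h,
    fun a D hD => (hm.isPairDer_mul_neg_mul a).add hD.isPairDer, ?_⟩
  · rintro A ⟨x, rfl⟩
    exact hL x
  rintro _ _ ⟨a, D, hD, rfl⟩ ⟨b, E, hE, rfl⟩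
  have hDE := (hm.isDeriv_lie_mul_mul a b).add (hD.lie hE)
  rw [lie_mul_add_mul_add hD hE, hf _ _ hDE, hf a D hD, hf b E hE,
    lie_neg_mul_add_neg_mul_add hD hE]

/-- If no nonzero `L_x` is a derivation, then `{L_x} ∩ Der(V) = {0}` and
`L_a + D ↦ (L_a + D, -L_a + D)` is a well-defined injective Lie algebra homomorphism
from `str(V)` into `Der(V,V)`. -/
theorem stmt2
    (h2 : (2 : K) ≠ 0) (h3 : (3 : K) ≠ 0)
    (m : V →ₗ[K] V →ₗ[K] V)
    (hcomm : ∀ x y : V, m x y = m y x)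
    (hJordan : ∀ x y z : V,
      ⁅(m x : Module.End K V), m (m y z)⁆ + ⁅(m y : Module.End K V), m (m z x)⁆
        + ⁅(m z : Module.End K V), m (m x y)⁆ = 0)
    (hL : ∀ x : V, IsDeriv m (m x) → (m x : Module.End K V) = 0) :
    (∀ A : Module.End K V, (∃ x, A = m x) → IsDeriv m A → A = 0) ∧
    ∃ f : Module.End K V → Module.End K V × Module.End K V,
      (∀ (a : V) (D : Module.End K V), IsDeriv m D →
        f (m a + D) = (m a + D, - m a + D)) ∧
      Set.InjOn f {A : Module.End K V | ∃ a D, IsDeriv m D ∧ A = m a + D} ∧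
      (∀ (a : V) (D : Module.End K V), IsDeriv m D →
        IsPairDer m (m a + D) (- m a + D)) ∧
      (∀ A B : Module.End K V,
        A ∈ {A : Module.End K V | ∃ a D, IsDeriv m D ∧ A = m a + D} →
        B ∈ {A : Module.End K V | ∃ a D, IsDeriv m D ∧ A = m a + D} →
        f ⁅A, B⁆ = (⁅(f A).1, (f B).1⁆, ⁅(f A).2, (f B).2⁆)) :=
  stmt2_general m hcomm hJordan hL
end

section
/- Let V be a Jordan algebra over K and assume that for every x ∈ V, if L_x is a derivation of V then L_x = 0. Then the projection onto the first component, (A,B) ↦ A, restricts to a Lie algebra isomorphism from Inn(V,V) onto the K-span of the operators D_{x,y} (x,y ∈ V) in End_K(V). In particular, if (A,B) ∈ Inn(V,V) and A = 0, then B = 0. -/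
variable {K V : Type*} [Field K] [AddCommGroup V] [Module K V]

/-!
Since `L_{xy} = L_{yx}`, the two components of a generator `(D_{x,y}, -D_{y,x})` of
`Inn(V,V)` satisfy `A + B = 4[L_x, L_y]` and `A - B = 4 L_{xy}`. In a Jordan algebra every
`[L_x, L_y]` is a derivation, so for all `(A, B) ∈ Inn(V,V)` the sum `A + B` is a derivation
and the difference `A - B` is some `L_z`. If `A = 0`, then `B = -L_z = L_{-z}` is a
derivation, hence `B = 0`. So the first projection is injective on `Inn(V,V)`, and it maps
the span of the generators onto the span of their first components.
-/

namespace JordanPair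

variable (m : V →ₗ[K] V →ₗ[K] V)

def derivations : Submodule K (Module.End K V) where
  carrier := {D | IsDeriv m D}
  add_mem' {D E} hD hE x y := by
    simp only [LinearMap.add_apply, hD x y, hE x y, map_add]
    abel
  zero_mem' x y := by simp
  smul_mem' c D hD x y := by simp only [LinearMap.smul_apply, hD x y, map_smul, smul_add]

/-- The generators `𝔻_{x,y} = (D_{x,y}, -D_{y,x})` of `Inn(V,V)`. -/
def innGenerators : Set (Module.End K V × Module.End K V) :=
  {p | ∃ x y, p = (Dop m x y, - Dop m y x)}

variable {m} (hcomm : ∀ x y : V, m x y = m y x)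
include hcomm

theorem dop_add_dop_swap (x y : V) :
    Dop m x y + Dop m y x = (4 : K) • (m (m x y) : Module.End K V) := by
  rw [Dop, Dop, hcomm y x, Ring.lie_def, Ring.lie_def]
  module

theorem dop_sub_dop_swap (x y : V) :
    Dop m x y - Dop m y x = (4 : K) • ⁅(m x : Module.End K V), (m y : Module.End K V)⁆ := by
  rw [Dop, Dop, hcomm y x, Ring.lie_def, Ring.lie_def]
  module

theorem fst_sub_snd_mem_range
    {p : Module.End K V × Module.End K V} (hp : p ∈ Submodule.span K (innGenerators m)) :
    p.1 - p.2 ∈ LinearMap.range m := by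
  change p ∈ (LinearMap.range m).comap (LinearMap.fst K _ _ - LinearMap.snd K _ _)
  refine Submodule.span_le.mpr ?_ hp
  rintro _ ⟨x, y, rfl⟩
  refine ⟨(4 : K) • m x y, ?_⟩
  change _ = Dop m x y - -Dop m y x
  rw [sub_neg_eq_add, dop_add_dop_swap hcomm, map_smul]

variable (hJordan : ∀ x y z : V,
  ⁅(m x : Module.End K V), m (m y z)⁆ + ⁅(m y : Module.End K V), m (m z x)⁆
    + ⁅(m z : Module.End K V), m (m x y)⁆ = 0)
include hJordan

theorem isDeriv_lie_of_jordan (a b : V) :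
    IsDeriv m ⁅(m a : Module.End K V), (m b : Module.End K V)⁆ := by
  intro c d
  have hacd := LinearMap.congr_fun (hJordan a c d) b
  have hbcd := LinearMap.congr_fun (hJordan b c d) a
  simp only [Ring.lie_def, LinearMap.add_apply, LinearMap.sub_apply, Module.End.mul_apply,
    LinearMap.zero_apply, map_sub] at hacd hbcd ⊢
  rw [hcomm (m c d) b, hcomm d a, hcomm (m a d) b, hcomm (m a c) b,
    hcomm d (m b (m a c)), hcomm c b, hcomm d b] at hacd
  rw [hcomm (m c d) a, hcomm b a, hcomm d b, hcomm (m b d) a,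
    hcomm (m b d) (m c a), hcomm c a, hcomm (m b c) (m d a), hcomm d a,
    hcomm (m b c) a, hcomm d (m a (m b c))] at hbcd
  linear_combination (norm := module) hacd - hbcd

theorem fst_add_snd_mem_derivations
    {p : Module.End K V × Module.End K V} (hp : p ∈ Submodule.span K (innGenerators m)) :
    p.1 + p.2 ∈ derivations m := by
  change p ∈ (derivations m).comap (LinearMap.fst K _ _ + LinearMap.snd K _ _)
  refine Submodule.span_le.mpr ?_ hp
  rintro _ ⟨x, y, rfl⟩
  change IsDeriv m (Dop m x y + -Dop m y x)
  rw [← sub_eq_add_neg, dop_sub_dop_swap hcomm]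
  exact (derivations m).smul_mem _ (isDeriv_lie_of_jordan hcomm hJordan x y)

theorem snd_eq_zero_of_fst_eq_zero
    (hL : ∀ x : V, IsDeriv m (m x) → (m x : Module.End K V) = 0)
    {p : Module.End K V × Module.End K V} (hp : p ∈ Submodule.span K (innGenerators m))
    (hp₁ : p.1 = 0) : p.2 = 0 := by
  have hder := fst_add_snd_mem_derivations hcomm hJordan hp
  obtain ⟨z, hz⟩ := fst_sub_snd_mem_range hcomm hp
  rw [hp₁, zero_sub] at hz
  rw [hp₁, zero_add] at hder
  have hsnd : (m (-z) : Module.End K V) = p.2 := by rw [map_neg, hz, neg_neg]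
  rw [← hsnd]
  exact hL (-z) (hsnd ▸ hder)

end JordanPair

theorem stmt3_general
    (m : V →ₗ[K] V →ₗ[K] V)
    (hcomm : ∀ x y : V, m x y = m y x)
    (hJordan : ∀ x y z : V,
      ⁅(m x : Module.End K V), m (m y z)⁆ + ⁅(m y : Module.End K V), m (m z x)⁆
        + ⁅(m z : Module.End K V), m (m x y)⁆ = 0)
    (hL : ∀ x : V, IsDeriv m (m x) → (m x : Module.End K V) = 0) :
    Set.BijOn (Prod.fst : Module.End K V × Module.End K V → Module.End K V)
      (Submodule.span K {p : Module.End K V × Module.End K V |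
          ∃ x y, p = (Dop m x y, - Dop m y x)} : Set _)
      (Submodule.span K {A : Module.End K V | ∃ x y, A = Dop m x y} : Set _) ∧
    (∀ p : Module.End K V × Module.End K V,
      p ∈ Submodule.span K {p : Module.End K V × Module.End K V |
          ∃ x y, p = (Dop m x y, - Dop m y x)} →
      p.1 = 0 → p.2 = 0) := by
  have hsnd : ∀ p ∈ Submodule.span K (JordanPair.innGenerators m), p.1 = 0 → p.2 = 0 :=
    fun p hp ↦ JordanPair.snd_eq_zero_of_fst_eq_zero hcomm hJordan hL hp
  refine ⟨?_, hsnd⟩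
  have himage : Prod.fst '' JordanPair.innGenerators m = {A | ∃ x y, A = Dop m x y} := by
    ext A
    constructor
    · rintro ⟨_, ⟨x, y, rfl⟩, rfl⟩
      exact ⟨x, y, rfl⟩
    · rintro ⟨x, y, rfl⟩
      exact ⟨_, ⟨x, y, rfl⟩, rfl⟩
  have hinj : Set.InjOn (LinearMap.fst K (Module.End K V) (Module.End K V))
      (Submodule.span K (JordanPair.innGenerators m)) :=
    LinearMap.injOn_of_disjoint_ker le_rfl <| Submodule.disjoint_def.mpr fun p hp hker ↦
      Prod.ext hker (hsnd p hp hker)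
  have hbij := hinj.bijOn_image
  rwa [← Submodule.map_coe, Submodule.map_span, LinearMap.coe_fst, himage] at hbij

/-- If no nonzero `L_x` is a derivation, then projection onto the first
component is a Lie algebra isomorphism from `Inn(V,V)` onto `span{D_{x,y}}`; in
particular if `(A,B) ∈ Inn(V,V)` and `A = 0` then `B = 0`. -/
theorem stmt3
    (h2 : (2 : K) ≠ 0) (h3 : (3 : K) ≠ 0)
    (m : V →ₗ[K] V →ₗ[K] V)
    (hcomm : ∀ x y : V, m x y = m y x)
    (hJordan : ∀ x y z : V,
      ⁅(m x : Module.End K V), m (m y z)⁆ + ⁅(m y : Module.End K V), m (m z x)⁆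
        + ⁅(m z : Module.End K V), m (m x y)⁆ = 0)
    (hL : ∀ x : V, IsDeriv m (m x) → (m x : Module.End K V) = 0) :
    Set.BijOn (Prod.fst : Module.End K V × Module.End K V → Module.End K V)
      (Submodule.span K {p : Module.End K V × Module.End K V |
          ∃ x y, p = (Dop m x y, - Dop m y x)} : Set _)
      (Submodule.span K {A : Module.End K V | ∃ x y, A = Dop m x y} : Set _) ∧
    (∀ p : Module.End K V × Module.End K V,
      p ∈ Submodule.span K {p : Module.End K V × Module.End K V |
          ∃ x y, p = (Dop m x y, - Dop m y x)} →
      p.1 = 0 → p.2 = 0) :=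
  stmt3_general m hcomm hJordan hL
end

section
/- Let V be a unital Jordan algebra over K with unit e. For a K-linear endomorphism D of V, the pair (D, −D) is a pair derivation of V if and only if D = L_a for some a ∈ V; in that case necessarily D = L_{D(e)}. -/
variable {K V : Type*} [Field K] [AddCommGroup V] [Module K V]

section Aux

variable (m : V →ₗ[K] V →ₗ[K] V)

lemma triple_neg₁ (x y z : V) : triple m (-x) y z = - triple m x y z := by
  simp only [triple, map_neg, LinearMap.neg_apply]
  abel

lemma triple_neg₂ (x y z : V) : triple m x (-y) z = - triple m x y z := by
  simp only [triple, map_neg, LinearMap.neg_apply]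
  abel

lemma triple_neg₃ (x y z : V) : triple m x y (-z) = - triple m x y z := by
  simp only [triple, map_neg, LinearMap.neg_apply]
  abel

/-- The linearized Jordan identity, evaluated at an element. -/
lemma jordan_eval
    (hJordan : ∀ x y z : V,
      ⁅(m x : Module.End K V), m (m y z)⁆ + ⁅(m y : Module.End K V), m (m z x)⁆
        + ⁅(m z : Module.End K V), m (m x y)⁆ = 0)
    (x y z w : V) :
    m x (m (m y z) w) - m (m y z) (m x w)
      + (m y (m (m z x) w) - m (m z x) (m y w))
      + (m z (m (m x y) w) - m (m x y) (m z w)) = 0 := by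
  have h := LinearMap.congr_fun (hJordan x y z) w
  simpa [Ring.lie_def, LinearMap.sub_apply, LinearMap.add_apply, Module.End.mul_apply] using h

/-- The core identity: `L_a {x,y,z} = {ax,y,z} - {x,ay,z} + {x,y,az}`, unscaled form. -/
lemma core_identity
    (hcomm : ∀ x y : V, m x y = m y x)
    (hJordan : ∀ x y z : V,
      ⁅(m x : Module.End K V), m (m y z)⁆ + ⁅(m y : Module.End K V), m (m z x)⁆
        + ⁅(m z : Module.End K V), m (m x y)⁆ = 0)
    (a x y z : V) :
    m a (m (m x y) z) + m a (m x (m y z)) - m a (m y (m x z))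
      = m (m (m a x) y) z + m (m a x) (m y z) - m y (m (m a x) z)
        - (m (m x (m a y)) z + m x (m (m a y) z) - m (m a y) (m x z))
        + (m (m x y) (m a z) + m x (m y (m a z)) - m y (m x (m a z))) := by
  have I1 := jordan_eval m hJordan a x y z
  have E2 := jordan_eval m hJordan x a z y
  have E3 := jordan_eval m hJordan y a z x
  simp only [hcomm] at I1 E2 E3 ⊢
  linear_combination (norm := abel1) I1 - E2 + E3

/-- Scaled version: `L_a {x,y,z} = {ax,y,z} - {x,ay,z} + {x,y,az}`. -/
lemma mul_triple
    (hcomm : ∀ x y : V, m x y = m y x)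
    (hJordan : ∀ x y z : V,
      ⁅(m x : Module.End K V), m (m y z)⁆ + ⁅(m y : Module.End K V), m (m z x)⁆
        + ⁅(m z : Module.End K V), m (m x y)⁆ = 0)
    (a x y z : V) :
    m a (triple m x y z)
      = triple m (m a x) y z - triple m x (m a y) z + triple m x y (m a z) := by
  have core := core_identity m hcomm hJordan a x y z
  simp only [triple, map_nsmul, map_add, map_sub, smul_add, smul_sub]
  linear_combination (norm := abel1) (2:ℕ) • core

end Aux

/-- For a unital Jordan algebra, `(D, -D)` is a pair derivation iff `D = L_a`
for some `a`; in that case necessarily `D = L_{D(e)}`. -/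
theorem stmt6
    (h2 : (2 : K) ≠ 0) (h3 : (3 : K) ≠ 0)
    (m : V →ₗ[K] V →ₗ[K] V)
    (hcomm : ∀ x y : V, m x y = m y x)
    (hJordan : ∀ x y z : V,
      ⁅(m x : Module.End K V), m (m y z)⁆ + ⁅(m y : Module.End K V), m (m z x)⁆
        + ⁅(m z : Module.End K V), m (m x y)⁆ = 0)
    (e : V) (he : ∀ x : V, m e x = x)
    (D : Module.End K V) :
    (IsPairDer m D (-D) ↔ ∃ a : V, D = m a) ∧
    (IsPairDer m D (-D) → D = m (D e)) := by
  have he' : ∀ x : V, m x e = x := fun x => (hcomm x e).trans (he x)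
  -- Forward: any such D equals L_{D e}.
  have fwd : IsPairDer m D (-D) → D = m (D e) := by
    intro hpd
    ext y
    have h := (hpd e y e).1
    simp only [triple, he, he', LinearMap.neg_apply, map_neg, map_nsmul, map_add, map_sub,
      smul_add, smul_sub, smul_neg] at h
    have h4 : (4:ℕ) • (D y) = (4:ℕ) • (m (D e) y) := by
      linear_combination (norm := abel1) h
    have h4K : (4:K) • (D y) = (4:K) • (m (D e) y) := by
      rw [show ((4:K)) = ((4:ℕ) : K) by norm_num, Nat.cast_smul_eq_nsmul, Nat.cast_smul_eq_nsmul]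
      exact h4
    have h4ne : (4:K) ≠ 0 := by
      have : (4:K) = 2 * 2 := by norm_num
      rw [this]; exact mul_ne_zero h2 h2
    exact smul_right_injective V h4ne h4K
  -- Backward: (L_a, -L_a) is a pair derivation.
  have bwd : ∀ a : V, IsPairDer m (m a) (-(m a)) := by
    intro a x y z
    have key := mul_triple m hcomm hJordan a x y z
    constructor
    · simp only [LinearMap.neg_apply, triple_neg₂]
      rw [key]; abel
    · simp only [LinearMap.neg_apply, triple_neg₁, triple_neg₃]
      rw [key]; abel
  refine ⟨⟨fun hpd => ⟨D e, fwd hpd⟩, ?_⟩, fwd⟩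
  rintro ⟨a, rfl⟩
  exact bwd a
end

section
/- Let V be a unital Jordan algebra over K with unit e. (i) If a pair (X, Y) of K-linear endomorphisms of V satisfies the weakly-structural conditions, then Y = −X + 2L_{X(e)}. (ii) For X ∈ End_K(V), the identity U_{X(a),b} + U_{a,X(b)} = X∘U_{a,b} + U_{a,b}∘X* holds for all a, b ∈ V, where X* := −X + 2L_{X(e)}, if and only if the pair (X, −X + 2L_{X(e)}) satisfies the weakly-structural conditions. -/
variable {K V : Type*} [Field K] [AddCommGroup V] [Module K V]

/-- The operator `U_{a,b}`, `U_{a,b}(z) = {a,z,b}`. -/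
def Uop (m : V →ₗ[K] V →ₗ[K] V) (a b : V) : Module.End K V :=
  2 • ((m.flip b ∘ₗ m a : Module.End K V) + (m a ∘ₗ m.flip b : Module.End K V)
    - (m.flip (m a b) : Module.End K V))

/-- The weakly-structural conditions on a pair `(X, Y)` of endomorphisms. -/
def WeaklyStruct (m : V →ₗ[K] V →ₗ[K] V) (X Y : Module.End K V) : Prop :=
  ∀ a b : V,
    (Uop m (X a) b + Uop m a (X b) = X * Uop m a b + Uop m a b * Y) ∧
    (Uop m (Y a) b + Uop m a (Y b) = Y * Uop m a b + Uop m a b * X)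

section Aux

variable (m : V →ₗ[K] V →ₗ[K] V) (hcomm : ∀ x y : V, m x y = m y x)
include hcomm

theorem aux_hUeq (a b : V) :
    Uop m a b = 2 • ((m b * m a : Module.End K V) + m a * m b - m (m a b)) := by
  have hf : ∀ w : V, m.flip w = m w := by intro w; ext x; simp [hcomm x w]
  rw [Uop, hf, hf]; rfl

theorem aux_Uadd1 (x y b : V) : Uop m (x + y) b = Uop m x b + Uop m y b := by
  simp only [aux_hUeq m hcomm, map_add, mul_add, add_mul, LinearMap.add_apply]
  abel

theorem aux_Uadd2 (a x y : V) : Uop m a (x + y) = Uop m a x + Uop m a y := by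
  simp only [aux_hUeq m hcomm, map_add, mul_add, add_mul]
  abel

theorem aux_Uneg1 (x b : V) : Uop m (-x) b = -Uop m x b := by
  simp only [aux_hUeq m hcomm, map_neg, mul_neg, neg_mul, LinearMap.neg_apply]
  abel

theorem aux_Uneg2 (a x : V) : Uop m a (-x) = -Uop m a x := by
  simp only [aux_hUeq m hcomm, map_neg, mul_neg, neg_mul]
  abel

theorem aux_Usmul1 (k : K) (x b : V) : Uop m (k • x) b = k • Uop m x b := by
  simp only [aux_hUeq m hcomm, map_smul, mul_smul_comm, smul_mul_assoc, LinearMap.smul_apply]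
  rw [smul_comm]
  congr 1
  rw [smul_sub, smul_add]

theorem aux_Usmul2 (k : K) (a x : V) : Uop m a (k • x) = k • Uop m a x := by
  simp only [aux_hUeq m hcomm, map_smul, mul_smul_comm, smul_mul_assoc]
  rw [smul_comm]
  congr 1
  rw [smul_sub, smul_add]

variable (hJordan : ∀ x y z : V,
      ⁅(m x : Module.End K V), m (m y z)⁆ + ⁅(m y : Module.End K V), m (m z x)⁆
        + ⁅(m z : Module.End K V), m (m x y)⁆ = 0)
include hJordan

/-- The linearized Jordan identity as an operator identity. -/
theorem aux_lemA (x y w : V) :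
    (m x : Module.End K V) * m w * m y + (m y : Module.End K V) * m w * m x
        + m (m (m x y) w)
      = (m (m x w) : Module.End K V) * m y + (m (m y w) : Module.End K V) * m x
        + (m (m x y) : Module.End K V) * m w := by
  ext z
  have h := LinearMap.congr_fun (hJordan x y z) w
  simp only [Ring.lie_def, LinearMap.add_apply, LinearMap.sub_apply, Module.End.mul_apply,
    LinearMap.zero_apply] at h
  rw [hcomm (m y z) w, hcomm (m y z) (m x w), hcomm z x, hcomm (m x z) w,
    hcomm (m x z) (m y w), hcomm z (m (m x y) w), hcomm z w] at h
  simp only [LinearMap.add_apply, Module.End.mul_apply]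
  linear_combination (norm := module) h

/-- `L_c` is structural with adjoint itself. -/
theorem aux_core (c a b : V) :
    Uop m (m c a) b + Uop m a (m c b)
      = (m c : Module.End K V) * Uop m a b + Uop m a b * (m c : Module.End K V) := by
  simp only [aux_hUeq m hcomm]
  have hB := aux_lemA m hcomm hJordan c a b
  have hC := aux_lemA m hcomm hJordan c b a
  have hJ := hJordan b a c
  rw [hcomm a c, hcomm b a] at hJ
  simp only [Ring.lie_def] at hJ
  rw [hcomm b a] at hC
  rw [hcomm a (m c b)]
  linear_combination (norm := noncomm_ring) 2 • hJ - 2 • hB - 2 • hC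

end Aux

/-- For a unital Jordan algebra: (i) if `(X, Y)` is weakly structural then
`Y = -X + 2 L_{X(e)}`; (ii) the single identity with `X* = -X + 2 L_{X(e)}` holds for all
`a, b` iff the pair `(X, X*)` is weakly structural. -/
theorem stmt11
    (h2 : (2 : K) ≠ 0) (h3 : (3 : K) ≠ 0)
    (m : V →ₗ[K] V →ₗ[K] V)
    (hcomm : ∀ x y : V, m x y = m y x)
    (hJordan : ∀ x y z : V,
      ⁅(m x : Module.End K V), m (m y z)⁆ + ⁅(m y : Module.End K V), m (m z x)⁆
        + ⁅(m z : Module.End K V), m (m x y)⁆ = 0)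
    (e : V) (he : ∀ x : V, m e x = x) :
    (∀ X Y : Module.End K V, WeaklyStruct m X Y →
      Y = -X + (2 : K) • (m (X e) : Module.End K V)) ∧
    (∀ X : Module.End K V,
      (∀ a b : V, Uop m (X a) b + Uop m a (X b)
          = X * Uop m a b + Uop m a b * (-X + (2 : K) • (m (X e) : Module.End K V))) ↔
      WeaklyStruct m X (-X + (2 : K) • (m (X e) : Module.End K V))) := by
  have hme : (m e : Module.End K V) = 1 := by ext x; simp [he x]
  have hae : ∀ u : V, m u e = u := fun u => by rw [hcomm u e, he u]
  constructor
  · -- part (i)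
    intro X Y hW
    have h1 := (hW e e).1
    simp only [aux_hUeq m hcomm, hme, Module.End.one_apply, hae, he, add_sub_cancel_right, one_mul, mul_one, mul_smul_comm,
      smul_mul_assoc] at h1
    apply smul_right_injective (Module.End K V) h2
    linear_combination (norm := module) -h1
  · -- part (ii)
    intro X
    constructor
    · intro h a b
      refine ⟨h a b, ?_⟩
      have hco := aux_core m hcomm hJordan (X e) a b
      have hab := h a b
      have hYa : (-X + (2 : K) • (m (X e) : Module.End K V)) a
          = -(X a) + (2 : K) • (m (X e) a) := by simp
      have hYb : (-X + (2 : K) • (m (X e) : Module.End K V)) b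
          = -(X b) + (2 : K) • (m (X e) b) := by simp
      rw [hYa, hYb, aux_Uadd1 m hcomm, aux_Uneg1 m hcomm, aux_Usmul1 m hcomm,
        aux_Uadd2 m hcomm, aux_Uneg2 m hcomm, aux_Usmul2 m hcomm]
      simp only [mul_add, add_mul, neg_mul, mul_neg, smul_mul_assoc, mul_smul_comm] at hab ⊢
      linear_combination (norm := module) (2 : K) • hco - hab
    · intro h a b
      exact (h a b).1
end
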